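/- Let d ∈ ℕ and Ω ⊂ ℝ^d open. If n ∈ W^{1,2}(Ω, S²) (i.e., n ∈ W^{1,2}(Ω, ℝ³) with |n| = 1 a.e.), then the polar angle θ(x) := arcsin(n₃(x)) belongs to W^{1,2}(Ω, [-π/2, π/2]). -/

import Mathlib

/-!
The polar angle `arcsin ⟪n, e⟫` of a unit vector `n` is `π / 2 - ∠(n, e)`. By the triangle
inequality for angles, the polar angles of two unit vectors differ by at most the angle between
them, and on the unit sphere that angle is at most `π / 2` times the chord, since
`cos θ ≤ 1 - 2 θ² / π²` on `[-π, π]`. So the polar angle is a `π / 2`-Lipschitz function of `n`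
on the sphere. A Lipschitz function of `n` inherits the `L²` bounds on translates of `n`, because
the translates in question stay in `Ω`, where `n` is a.e. on the sphere.
-/

open Real Set MeasureTheory

/-- A formalisation of membership in `W^{1,2}(Ω, F)`: the function is in `L²(Ω)` and its
translates satisfy a uniform difference-quotient bound in `L²` on compactly contained
subsets (the difference-quotient characterisation of `W^{1,2}`). -/
def MemW12 {d : ℕ} {F : Type*} [NormedAddCommGroup F] (Ω : Set (Fin d → ℝ))
    (f : (Fin d → ℝ) → F) : Prop :=
  MeasureTheory.MemLp f 2 (MeasureTheory.volume.restrict Ω) ∧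
  ∃ C : ℝ, ∀ Ω' : Set (Fin d → ℝ), IsCompact (closure Ω') → closure Ω' ⊆ Ω →
    ∀ (j : Fin d) (h : ℝ), (∀ x ∈ Ω', x + h • (Pi.single j 1 : Fin d → ℝ) ∈ Ω) →
      (∫ x in Ω', ‖f (x + h • (Pi.single j 1 : Fin d → ℝ)) - f x‖ ^ 2) ≤ C * h ^ 2

open scoped RealInnerProductSpace NNReal ENNReal

namespace InnerProductGeometry

variable {V : Type*} [NormedAddCommGroup V] [InnerProductSpace ℝ V]

theorem angle_le_pi_div_two_mul_norm_sub {x y : V} (hx : ‖x‖ = 1) (hy : ‖y‖ = 1) :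
    angle x y ≤ π / 2 * ‖x - y‖ := by
  have hcos := cos_le_one_sub_mul_cos_sq
    (abs_le.mpr ⟨by linarith [angle_nonneg x y, pi_pos], angle_le_pi x y⟩)
  have hlaw := norm_sub_sq_eq_norm_sq_add_norm_sq_sub_two_mul_norm_mul_norm_mul_cos_angle x y
  rw [hx, hy] at hlaw
  have hsq : (angle x y) ^ 2 ≤ (π / 2 * ‖x - y‖) ^ 2 := by
    have hπ := pi_pos
    rw [mul_pow, sq ‖x - y‖, hlaw]
    field_simp at hcos ⊢
    nlinarith
  exact (pow_le_pow_iff_left₀ (angle_nonneg x y) (by positivity) two_ne_zero).mp hsq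

theorem abs_angle_sub_angle_le (x y z : V) : |angle x z - angle y z| ≤ angle x y :=
  abs_sub_le_iff.mpr ⟨by linarith [angle_le_angle_add_angle x y z],
    by linarith [angle_le_angle_add_angle y x z, angle_comm x y]⟩

theorem arcsin_inner_eq_pi_div_two_sub_angle {x e : V} (hx : ‖x‖ = 1) (he : ‖e‖ = 1) :
    arcsin ⟪x, e⟫ = π / 2 - angle x e := by
  rw [angle, hx, he, mul_one, div_one, arccos_eq_pi_div_two_sub_arcsin, sub_sub_cancel]

theorem lipschitzOnWith_arcsin_inner_sphere {e : V} (he : ‖e‖ = 1) :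
    LipschitzOnWith (Real.toNNReal (π / 2)) (fun x => arcsin ⟪x, e⟫) (Metric.sphere 0 1) := by
  refine LipschitzOnWith.of_dist_le' fun x hx y hy => ?_
  rw [mem_sphere_zero_iff_norm] at hx hy
  rw [dist_eq_norm, dist_eq_norm, Real.norm_eq_abs, arcsin_inner_eq_pi_div_two_sub_angle hx he,
    arcsin_inner_eq_pi_div_two_sub_angle hy he, sub_sub_sub_cancel_left, abs_sub_comm]
  exact (abs_angle_sub_angle_le x y e).trans (angle_le_pi_div_two_mul_norm_sub hx hy)

end InnerProductGeometry

namespace MeasureTheory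

variable {G F : Type*} [MeasurableSpace G] [AddGroup G] [MeasurableAdd G] {μ : Measure G}
  [μ.IsAddRightInvariant] {Ω Ω' : Set G} {v : G}

theorem map_add_const_restrict_le (h : ∀ x ∈ Ω', x + v ∈ Ω) :
    (μ.restrict Ω').map (· + v) ≤ μ.restrict Ω := by
  refine Measure.le_iff.mpr fun s hs => ?_
  rw [Measure.map_apply (measurable_add_const v) hs,
    Measure.restrict_apply (measurable_add_const v hs), Measure.restrict_apply hs]
  calc μ ((· + v) ⁻¹' s ∩ Ω') ≤ μ ((· + v) ⁻¹' (s ∩ Ω)) :=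
        measure_mono fun x hx => ⟨hx.1, h x hx.2⟩
    _ = μ (s ∩ Ω) := measure_preimage_add_right μ v _

theorem MemLp.comp_add_const_restrict [NormedAddCommGroup F] {f : G → F} {p : ℝ≥0∞}
    (hf : MemLp f p (μ.restrict Ω)) (h : ∀ x ∈ Ω', x + v ∈ Ω) :
    MemLp (fun x => f (x + v)) p (μ.restrict Ω') :=
  (hf.mono_measure (map_add_const_restrict_le h)).comp_of_map
    (measurable_add_const v).aemeasurable

theorem ae_restrict_comp_add_const {P : G → Prop} (hP : ∀ᵐ x ∂μ.restrict Ω, P x)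
    (h : ∀ x ∈ Ω', x + v ∈ Ω) : ∀ᵐ x ∂μ.restrict Ω', P (x + v) :=
  ae_of_ae_map (measurable_add_const v).aemeasurable (ae_mono (map_add_const_restrict_le h) hP)

theorem setIntegral_norm_comp_add_sub_sq_le {E : Type*} [NormedAddCommGroup F]
    [NormedAddCommGroup E] {f : G → F} {g : F → E} {s : Set F} {K : ℝ≥0}
    (hf : MemLp f 2 (μ.restrict Ω)) (hfs : ∀ᵐ x ∂μ.restrict Ω, f x ∈ s)
    (hg : LipschitzOnWith K g s) (hΩ' : Ω' ⊆ Ω) (h : ∀ x ∈ Ω', x + v ∈ Ω) :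
    ∫ x in Ω', ‖g (f (x + v)) - g (f x)‖ ^ 2 ∂μ ≤ K ^ 2 * ∫ x in Ω', ‖f (x + v) - f x‖ ^ 2 ∂μ := by
  have hfΩ' : MemLp f 2 (μ.restrict Ω') := hf.mono_measure (Measure.restrict_mono hΩ' le_rfl)
  have hint := ((hf.comp_add_const_restrict h).sub hfΩ').norm.integrable_sq
  rw [← integral_const_mul]
  refine integral_mono_of_nonneg (ae_of_all _ fun _ => by positivity) (hint.const_mul _) ?_
  filter_upwards [ae_restrict_comp_add_const hfs h, ae_restrict_of_ae_restrict_of_subset hΩ' hfs]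
    with x hxv hx
  have hlip := hg.dist_le_mul _ hxv _ hx
  rw [dist_eq_norm, dist_eq_norm] at hlip
  rw [← mul_pow]
  gcongr

end MeasureTheory

theorem MemW12.comp {d : ℕ} {F E : Type*} [NormedAddCommGroup F] [NormedAddCommGroup E]
    {Ω : Set (Fin d → ℝ)} {f : (Fin d → ℝ) → F} {g : F → E} {s : Set F} {K : ℝ≥0} {c : ℝ}
    (hf : MemW12 Ω f) (hfs : ∀ᵐ x ∂volume.restrict Ω, f x ∈ s) (hgc : Continuous g)
    (hg : LipschitzOnWith K g s) (hgs : ∀ y ∈ s, ‖g y‖ ≤ c * ‖y‖) :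
    MemW12 Ω (fun x => g (f x)) := by
  obtain ⟨hf2, C, hC⟩ := hf
  refine ⟨hf2.of_le_mul (hgc.comp_aestronglyMeasurable hf2.1) (hfs.mono fun x hx => hgs _ hx),
    K ^ 2 * C, fun Ω' hcompact hΩ' j h hmove => ?_⟩
  calc _ ≤ K ^ 2 * ∫ x in Ω', ‖f (x + h • (Pi.single j 1 : Fin d → ℝ)) - f x‖ ^ 2 :=
        setIntegral_norm_comp_add_sub_sq_le hf2 hfs hg (subset_closure.trans hΩ') hmove
    _ ≤ K ^ 2 * (C * h ^ 2) := by gcongr; exact hC Ω' hcompact hΩ' j h hmove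
    _ = K ^ 2 * C * h ^ 2 := by ring

theorem polar_angle_regularity_general (d : ℕ) (Ω : Set (Fin d → ℝ))
    (n : (Fin d → ℝ) → EuclideanSpace ℝ (Fin 3))
    (hunit : ∀ᵐ x ∂(MeasureTheory.volume.restrict Ω), ‖n x‖ = 1)
    (hn : MemW12 Ω n) :
    MemW12 Ω (fun x => Real.arcsin (n x 2)) ∧
    ∀ x, Real.arcsin (n x 2) ∈ Set.Icc (-(π / 2)) (π / 2) := by
  set e : EuclideanSpace ℝ (Fin 3) := EuclideanSpace.single 2 1
  have he : ‖e‖ = 1 := by simp [e]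
  have hcoord (y : EuclideanSpace ℝ (Fin 3)) : ⟪y, e⟫ = y 2 := by
    simp [e, EuclideanSpace.inner_single_right]
  have hθ : MemW12 Ω (fun x => arcsin ⟪n x, e⟫) :=
    hn.comp (g := fun y => arcsin ⟪y, e⟫) (s := Metric.sphere 0 1) (c := π / 2)
      (by simpa only [mem_sphere_zero_iff_norm] using hunit) (by fun_prop)
      (InnerProductGeometry.lipschitzOnWith_arcsin_inner_sphere he) fun y hy => by
        rw [mem_sphere_zero_iff_norm.mp hy, mul_one, Real.norm_eq_abs, abs_le]
        exact arcsin_mem_Icc _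
  simp only [hcoord] at hθ
  exact ⟨hθ, fun x => arcsin_mem_Icc _⟩

theorem polar_angle_regularity (d : ℕ) (Ω : Set (Fin d → ℝ)) (hΩ : IsOpen Ω)
    (n : (Fin d → ℝ) → EuclideanSpace ℝ (Fin 3))
    (hunit : ∀ᵐ x ∂(MeasureTheory.volume.restrict Ω), ‖n x‖ = 1)
    (hn : MemW12 Ω n) :
    MemW12 Ω (fun x => Real.arcsin (n x 2)) ∧
    ∀ x, Real.arcsin (n x 2) ∈ Set.Icc (-(π / 2)) (π / 2) :=
  polar_angle_regularity_general d Ω n hunit hn
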